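/- Let Q, U, W be nonempty finite sets, f : Q × U × W → Q, and σ : Q × U × W → ℝ. Suppose J : Q → ℝ satisfies J(q) ≥ 0 and J(q) ≥ 𝕋(J)(q) for all q ∈ Q. Then the value iteration sequence J₀ = 0, J_{k+1} = max{0, 𝕋(J_k)} (pointwise maximum with the zero function) satisfies J_k(q) ≤ J(q) for every k ∈ ℕ and every q ∈ Q; consequently the sequence (J_k) converges pointwise on Q to a limit J* with J*(q) ≤ J(q) for all q ∈ Q. -/

import Mathlib

open Finset Filter

/-- Dynamic programming operator:
`𝕋(J)(q) = min_{u ∈ U} max_{w ∈ W} ( -σ(q,u,w) + J(f(q,u,w)) )`. -/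
noncomputable def dpOp {Q U W : Type*} [Fintype U] [Nonempty U] [Fintype W] [Nonempty W]
    (f : Q × U × W → Q) (σ : Q × U × W → ℝ) (J : Q → ℝ) : Q → ℝ :=
  fun q => univ.inf' univ_nonempty fun u : U =>
    univ.sup' univ_nonempty fun w : W => -σ (q, u, w) + J (f (q, u, w))

/-- Value iteration sequence: `J₀ = 0`, `J_{k+1} = max {0, 𝕋(J_k)}` (pointwise). -/
noncomputable def valIter {Q U W : Type*} [Fintype U] [Nonempty U] [Fintype W] [Nonempty W]
    (f : Q × U × W → Q) (σ : Q × U × W → ℝ) : ℕ → Q → ℝ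
  | 0 => fun _ => 0
  | k + 1 => fun q => max 0 (dpOp f σ (valIter f σ k) q)

section

variable {Q U W : Type*} [Fintype U] [Nonempty U] [Fintype W] [Nonempty W]
  (f : Q × U × W → Q) (σ : Q × U × W → ℝ)

lemma dpOp_mono : Monotone (dpOp f σ) := fun _ _ h _ =>
  inf'_mono_fun fun _ _ => sup'_mono_fun fun _ _ => add_le_add_right (h _) _

lemma valIter_monotone : Monotone (valIter f σ) := by
  refine monotone_nat_of_le_succ fun k => ?_
  induction k with
  | zero => exact le_sup_left
  | succ k ih => exact sup_le_sup_left (dpOp_mono f σ ih) _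

lemma valIter_le_of_dpOp_le {J : Q → ℝ} (hJ0 : 0 ≤ J) (hJT : dpOp f σ J ≤ J) (k : ℕ) :
    valIter f σ k ≤ J := by
  induction k with
  | zero => exact hJ0
  | succ k ih => exact sup_le hJ0 ((dpOp_mono f σ ih).trans hJT)

end

theorem stmt_11_general {Q U W : Type*} [Fintype U] [Nonempty U]
    [Fintype W] [Nonempty W] (f : Q × U × W → Q) (σ : Q × U × W → ℝ)
    (J : Q → ℝ) (hJ0 : ∀ q : Q, 0 ≤ J q) (hJT : ∀ q : Q, dpOp f σ J q ≤ J q) :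
    (∀ (k : ℕ) (q : Q), valIter f σ k q ≤ J q) ∧
    ∃ Jstar : Q → ℝ, (∀ q : Q,
        Tendsto (fun k => valIter f σ k q) atTop (nhds (Jstar q))) ∧
      ∀ q : Q, Jstar q ≤ J q := by
  have hle : ∀ k, valIter f σ k ≤ J := valIter_le_of_dpOp_le f σ hJ0 hJT
  have hbdd (q : Q) : BddAbove (Set.range fun k => valIter f σ k q) :=
    ⟨J q, by rintro _ ⟨k, rfl⟩; exact hle k q⟩
  refine ⟨hle, fun q => ⨆ k, valIter f σ k q, fun q => ?_, fun q => ciSup_le fun k => hle k q⟩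
  exact tendsto_atTop_ciSup (fun _ _ hkl => valIter_monotone f σ hkl q) (hbdd q)

theorem stmt_11 {Q U W : Type*} [Fintype Q] [Nonempty Q] [Fintype U] [Nonempty U]
    [Fintype W] [Nonempty W] (f : Q × U × W → Q) (σ : Q × U × W → ℝ)
    (J : Q → ℝ) (hJ0 : ∀ q : Q, 0 ≤ J q) (hJT : ∀ q : Q, dpOp f σ J q ≤ J q) :
    (∀ (k : ℕ) (q : Q), valIter f σ k q ≤ J q) ∧
    ∃ Jstar : Q → ℝ, (∀ q : Q,
        Tendsto (fun k => valIter f σ k q) atTop (nhds (Jstar q))) ∧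
      ∀ q : Q, Jstar q ≤ J q :=
  stmt_11_general f σ J hJ0 hJT
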